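/- Let {s_k} be a strictly positive moment sequence with associated Krein–Langer string data defined via the subsequence k(j) enumerating indices with Δ_{1,k(j)} ≠ 0. Then the extended Stieltjes formulas hold: x_j = Σ_{i=0}^j l_i = Δ_{2,k(j)}/Δ_{0,k(j)}, Σ_{i=0}^{j−1} ω_i = −Δ_{−1,k(j)}/Δ_{1,k(j)}, and ∫_0^{x_j} w(x)² dx + Σ_{i=0}^{j−1} υ_i = −Δ_{−2,k(j)}/Δ_{0,k(j)}, where w is the piecewise-constant function with w(x) = Σ_{i: x_i < x} ω_i. -/

import Mathlib

/-!
At the point `0` every quantity is a ratio of Hankel determinants: expanding the determinant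
defining `P_n` along its last row gives `P_n(0) = c_n (-1)^n Δ_{1,n}` and
`Q_n(0) = c_n (-1)^n Δ_{-1,n}` with `c_n = (Δ_{0,n-1} Δ_{0,n})^{-1/2}`. The Desnanot–Jacobi
identity, applied to the Hankel matrices of `s`, of `(0, s_0, s_1, …)` and of `(0, 0, s_0, …)`,
gives three-term relations under which `Σ_{n ≤ N} P_n(0)²` and `Σ_{n ≤ N} Q_n(0)²` telescope
to `Δ_{2,N}/Δ_{0,N}` and `-Δ_{-2,N}/Δ_{0,N}`, and which forbid `Δ_{1,n}` to vanish at two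
consecutive `n`, so `k(j+1) - k(j) ∈ {1, 2}`. Along the subsequence `k` a skipped index adds
nothing to the `P`-sum (as `P_n(0)` vanishes with `Δ_{1,n}`) and exactly `υ_j` to the `Q`-sum,
the `ω_j` telescope to `-Δ_{-1}/Δ_1`, and on `(x_m, x_{m+1}]` the step function `w` is constant
with `w² l_{m+1} = Q_{k(m+1)}(0)²`.
-/

open MeasureTheory

noncomputable section

/-- The Hankel determinant `Δ_{0,n} = det (s_{i+j})_{0 ≤ i,j ≤ n}`. -/
def hankel (s : ℕ → ℝ) (n : ℕ) : ℝ :=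
  (Matrix.of fun i j : Fin (n + 1) => s (i.1 + j.1)).det

/-- `Δ_{0,n-1}` with the convention `Δ_{0,-1} = 1`. -/
def hankelPrev (s : ℕ → ℝ) : ℕ → ℝ
  | 0 => 1
  | n + 1 => hankel s n

/-- `Δ_{1,n} = det (s_{1+i+j})_{0 ≤ i,j ≤ n−1}` (with `Δ_{1,0} = 1`). -/
def hankel1 (s : ℕ → ℝ) (n : ℕ) : ℝ :=
  (Matrix.of fun i j : Fin n => s (1 + i.1 + j.1)).det

/-- `Δ_{2,n} = det (s_{2+i+j})_{0 ≤ i,j ≤ n−1}` (with `Δ_{2,0} = 1`). -/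
def hankel2 (s : ℕ → ℝ) (n : ℕ) : ℝ :=
  (Matrix.of fun i j : Fin n => s (2 + i.1 + j.1)).det

/-- `Δ_{−1,n}`: the `(n+1)×(n+1)` determinant with top-left entry `0` and entries
`s_{i+j−1}` for `i+j ≥ 1` (so `Δ_{−1,0} = 0`). -/
def hankelm1 (s : ℕ → ℝ) (n : ℕ) : ℝ :=
  (Matrix.of fun i j : Fin (n + 1) =>
    if i.1 + j.1 = 0 then (0 : ℝ) else s (i.1 + j.1 - 1)).det

/-- `Δ_{−2,n}`: the `(n+2)×(n+2)` determinant with entries `0` for `i+j < 2` and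
`s_{i+j−2}` for `i+j ≥ 2` (so `Δ_{−2,0} = 0`). -/
def hankelm2 (s : ℕ → ℝ) (n : ℕ) : ℝ :=
  (Matrix.of fun i j : Fin (n + 2) =>
    if i.1 + j.1 < 2 then (0 : ℝ) else s (i.1 + j.1 - 2)).det

/-- `ρ` is a solution of the Hamburger moment problem with data `s`. -/
def IsMomentSolution (s : ℕ → ℝ) (ρ : Measure ℝ) : Prop :=
  ∀ k : ℕ, Integrable (fun x : ℝ => x ^ k) ρ ∧ (∫ x, x ^ k ∂ρ) = s k

/-- The orthonormal polynomial of the first kind `P_n`, via the determinant formula. -/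
def Pn (s : ℕ → ℝ) (n : ℕ) (z : ℝ) : ℝ :=
  (Real.sqrt (hankelPrev s n * hankel s n))⁻¹ *
    (Matrix.of fun i j : Fin (n + 1) =>
      if i.1 < n then s (i.1 + j.1) else z ^ j.1).det

/-- The polynomial of the second kind `Q_n(z) = ∫ (P_n(λ) − P_n(z))/(λ − z) dρ(λ)`. -/
def Qn (s : ℕ → ℝ) (ρ : Measure ℝ) (n : ℕ) (z : ℝ) : ℝ :=
  ∫ t, (if t = z then deriv (Pn s n) z else (Pn s n t - Pn s n z) / (t - z)) ∂ρ

namespace Matrix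

variable {R : Type*} [CommRing R] {m : ℕ}

theorem det_eq_sq_mul_det_submatrix_of_col_zero_of_col_last
    (M : Matrix (Fin (m + 2)) (Fin (m + 2)) R) (d : R)
    (h0 : ∀ i, M i 0 = if i = 0 then d else 0)
    (hl : ∀ i, M i (Fin.last _) = if i = Fin.last _ then d else 0) :
    M.det = d ^ 2 * (M.submatrix (fun i : Fin m => i.castSucc.succ)
      (fun i => i.castSucc.succ)).det := by
  rw [det_succ_column_zero, Fintype.sum_eq_single 0 (fun i hi => by simp [h0, hi]),
    det_succ_column _ (Fin.last m), Fintype.sum_eq_single (Fin.last m)]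
  · simp [h0, hl, submatrix_submatrix, Function.comp_def, pow_two, mul_assoc]
  · intro i hi
    simp [hl, Fin.succ_last, hi]

theorem det_updateCol_updateCol_one (u v : Fin (m + 2) → R) :
    (((1 : Matrix (Fin (m + 2)) (Fin (m + 2)) R).updateCol 0 u).updateCol (Fin.last _) v).det
      = u 0 * v (Fin.last _) - u (Fin.last _) * v 0 := by
  have h0l : (0 : Fin (m + 2)) ≠ Fin.last _ := Fin.last_pos.ne
  -- a rank-two perturbation of the identity, whose determinant is a `2 × 2` one
  let U : Matrix (Fin (m + 2)) (Fin 2) R :=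
    of fun i => ![u i - if i = 0 then 1 else 0, v i - if i = Fin.last _ then 1 else 0]
  let W : Matrix (Fin 2) (Fin (m + 2)) R := of ![Pi.single 0 1, Pi.single (Fin.last _) 1]
  have hUW : ((1 : Matrix (Fin (m + 2)) (Fin (m + 2)) R).updateCol 0 u).updateCol (Fin.last _) v
      = 1 + U * W := by
    ext i j
    simp only [updateCol_apply, add_apply, mul_apply, Fin.sum_univ_two, U, W, of_apply,
      Matrix.cons_val_zero, Matrix.cons_val_one, Pi.single_apply, one_apply]
    split_ifs <;> simp_all
  rw [hUW, det_one_add_mul_comm, det_fin_two]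
  simp [U, W, h0l, h0l.symm]
  ring

theorem det_mul_desnanot_jacobi (A : Matrix (Fin (m + 2)) (Fin (m + 2)) R) :
    A.det * (A.det * (A.submatrix (fun i : Fin m => i.castSucc.succ)
        (fun i => i.castSucc.succ)).det)
      = A.det * ((A.submatrix Fin.succ Fin.succ).det * (A.submatrix Fin.castSucc Fin.castSucc).det
        - (A.submatrix Fin.succ Fin.castSucc).det * (A.submatrix Fin.castSucc Fin.succ).det) := by
  -- `A * C` keeps the inner columns of `A`; its first and last ones are `det A` times unit vectors
  set C := ((1 : Matrix (Fin (m + 2)) (Fin (m + 2)) R).updateCol 0 (fun i => A.adjugate i 0))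
    |>.updateCol (Fin.last _) (fun i => A.adjugate i (Fin.last _))
  have hAC : (A * C).det = A.det ^ 2 * (A.submatrix (fun i : Fin m => i.castSucc.succ)
      (fun i => i.castSucc.succ)).det := by
    have hcol : ∀ i j, j = 0 ∨ j = Fin.last _ →
        (A * C) i j = (A.det • 1 : Matrix _ _ R) i j := by
      rintro i j (rfl | rfl) <;> rw [← mul_adjugate A] <;> simp [C, mul_apply]
    rw [det_eq_sq_mul_det_submatrix_of_col_zero_of_col_last _ A.det
      (fun i => by simp [hcol i 0 (.inl rfl), one_apply])
      (fun i => by simp [hcol i _ (.inr rfl), one_apply])]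
    congr 2
    ext i j
    have hj0 : j.castSucc.succ ≠ 0 := Fin.succ_ne_zero _
    have hjl : j.castSucc.succ ≠ Fin.last _ := by simp [Fin.ext_iff]; omega
    simp [C, mul_apply, one_apply, hj0, hjl]
  have hC : C.det
      = (A.submatrix Fin.succ Fin.succ).det * (A.submatrix Fin.castSucc Fin.castSucc).det
        - (A.submatrix Fin.succ Fin.castSucc).det * (A.submatrix Fin.castSucc Fin.succ).det := by
    rw [det_updateCol_updateCol_one]
    simp only [adjugate_fin_succ_eq_det_submatrix, Fin.succAbove_zero, Fin.succAbove_last,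
      Fin.val_zero, Fin.val_last]
    have hsign : (-1 : R) ^ (m + 1 + (m + 1)) = 1 := Even.neg_one_pow ⟨_, rfl⟩
    linear_combination
      ((A.submatrix Fin.succ Fin.succ).det * (A.submatrix Fin.castSucc Fin.castSucc).det
        - (A.submatrix Fin.succ Fin.castSucc).det * (A.submatrix Fin.castSucc Fin.succ).det) * hsign
  rw [← hC, ← det_mul, hAC]
  ring

theorem desnanot_jacobi (A : Matrix (Fin (m + 2)) (Fin (m + 2)) R) :
    A.det * (A.submatrix (fun i : Fin m => i.castSucc.succ) (fun i => i.castSucc.succ)).det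
      = (A.submatrix Fin.succ Fin.succ).det * (A.submatrix Fin.castSucc Fin.castSucc).det
        - (A.submatrix Fin.succ Fin.castSucc).det * (A.submatrix Fin.castSucc Fin.succ).det := by
  -- cancel `det` for the generic matrix, where it is not a zero divisor, then specialize
  have generic := mul_left_cancel₀ (det_mvPolynomialX_ne_zero (Fin (m + 2)) ℤ)
    (det_mul_desnanot_jacobi (mvPolynomialX (Fin (m + 2)) (Fin (m + 2)) ℤ))
  have hA : (mvPolynomialX (Fin (m + 2)) (Fin (m + 2)) ℤ).map
      (MvPolynomial.aeval fun p => A p.1 p.2) = A := mvPolynomialX_mapMatrix_aeval ℤ A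
  simpa only [map_mul, map_sub, AlgHom.map_det, AlgHom.mapMatrix_apply, ← submatrix_map, hA]
    using congrArg (MvPolynomial.aeval fun p => A p.1 p.2) generic

end Matrix

section Hankel

variable {R : Type*} [CommRing R]

def hankelDet (g : ℕ → R) (n : ℕ) : R :=
  (Matrix.of fun i j : Fin n => g (i + j)).det

theorem hankelDet_condensation (g : ℕ → R) (n : ℕ) :
    hankelDet g (n + 2) * hankelDet (fun t => g (t + 2)) n
      = hankelDet (fun t => g (t + 2)) (n + 1) * hankelDet g (n + 1)
        - hankelDet (fun t => g (t + 1)) (n + 1) ^ 2 := by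
  have h := Matrix.desnanot_jacobi (Matrix.of fun i j : Fin (n + 2) => g (i + j))
  unfold hankelDet
  rw [sq]
  convert h using 4 <;> ext i j <;> simp [Fin.val_succ] <;> ring_nf

end Hankel

/-- The Hankel matrices of `consZero s` and `consZero (consZero s)` are those of `Δ_{-1}` and
`Δ_{-2}`. -/
def consZero {M : Type*} [Zero M] (g : ℕ → M) : ℕ → M
  | 0 => 0
  | n + 1 => g n

section MomentDeterminants

variable (s : ℕ → ℝ)

theorem hankel_eq_hankelDet (n : ℕ) : hankel s n = hankelDet s (n + 1) := rfl

theorem hankel1_eq_hankelDet (n : ℕ) : hankel1 s n = hankelDet (fun t => s (t + 1)) n := by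
  unfold hankel1 hankelDet
  simp only [add_comm 1, add_right_comm _ 1]

theorem hankel2_eq_hankelDet (n : ℕ) : hankel2 s n = hankelDet (fun t => s (t + 2)) n := by
  unfold hankel2 hankelDet
  simp only [add_comm 2, add_right_comm _ 2]

theorem hankelm1_eq_hankelDet (n : ℕ) : hankelm1 s n = hankelDet (consZero s) (n + 1) := by
  unfold hankelm1 hankelDet
  congr 1
  ext i j
  rcases h : (i : ℕ) + j with _ | t <;> simp only [Matrix.of_apply, h] <;> simp [consZero]

theorem hankelm2_eq_hankelDet (n : ℕ) :
    hankelm2 s n = hankelDet (consZero (consZero s)) (n + 2) := by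
  unfold hankelm2 hankelDet
  congr 1
  ext i j
  rcases h : (i : ℕ) + j with _ | _ | t <;> simp only [Matrix.of_apply, h] <;> simp [consZero]

theorem hankel_succ_mul_hankel2 (n : ℕ) :
    hankel s (n + 1) * hankel2 s n = hankel2 s (n + 1) * hankel s n - hankel1 s (n + 1) ^ 2 := by
  rw [hankel_eq_hankelDet, hankel_eq_hankelDet, hankel2_eq_hankelDet, hankel2_eq_hankelDet,
    hankel1_eq_hankelDet]
  exact hankelDet_condensation s n

theorem hankelm1_succ_mul_hankel1 (n : ℕ) :
    hankelm1 s (n + 1) * hankel1 s n = hankel1 s (n + 1) * hankelm1 s n - hankel s n ^ 2 := by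
  rw [hankelm1_eq_hankelDet, hankelm1_eq_hankelDet, hankel1_eq_hankelDet, hankel1_eq_hankelDet,
    hankel_eq_hankelDet]
  exact hankelDet_condensation (consZero s) n

theorem hankelm2_succ_mul_hankel (n : ℕ) :
    hankelm2 s (n + 1) * hankel s n = hankel s (n + 1) * hankelm2 s n - hankelm1 s (n + 1) ^ 2 := by
  rw [hankelm2_eq_hankelDet, hankelm2_eq_hankelDet, hankel_eq_hankelDet, hankel_eq_hankelDet,
    hankelm1_eq_hankelDet]
  exact hankelDet_condensation (consZero (consZero s)) (n + 1)

theorem hankel1_zero : hankel1 s 0 = 1 := Matrix.det_fin_zero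

theorem hankel2_zero : hankel2 s 0 = 1 := Matrix.det_fin_zero

theorem hankelm1_zero : hankelm1 s 0 = 0 := by
  simp [hankelm1_eq_hankelDet, hankelDet, consZero]

theorem hankelm2_zero : hankelm2 s 0 = 0 := by
  simp [hankelm2_eq_hankelDet, hankelDet, consZero, Matrix.det_fin_two]

end MomentDeterminants

open Polynomial in
theorem Polynomial.dslope_eval_zero {𝕜 : Type*} [NontriviallyNormedField 𝕜]
    (p : 𝕜[X]) (t : 𝕜) : dslope (fun x => p.eval x) 0 t = p.divX.eval t := by
  rcases eq_or_ne t 0 with rfl | ht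
  · rw [dslope_same, Polynomial.deriv, ← coeff_zero_eq_eval_zero, ← coeff_zero_eq_eval_zero,
      coeff_derivative, coeff_divX]
    simp
  · have h := congrArg (eval t) p.divX_mul_X_add
    rw [eval_add, eval_mul, eval_X, eval_C, coeff_zero_eq_eval_zero] at h
    rw [dslope_of_ne _ ht, slope_def_field, ← h]
    field_simp
    ring

section OrthogonalPolynomials

open Polynomial

variable (s : ℕ → ℝ) (n : ℕ)

def lastRowCofactor (j : Fin (n + 1)) : ℝ :=
  (-1) ^ (n + j : ℕ) * (Matrix.of fun i k : Fin n => s (i + j.succAbove k)).det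

theorem det_lastRow (r : Fin (n + 1) → ℝ) :
    (Matrix.of fun i j : Fin (n + 1) => if (i : ℕ) < n then s (i + j) else r j).det
      = ∑ j, lastRowCofactor s n j * r j := by
  rw [Matrix.det_succ_row _ (Fin.last n)]
  refine Finset.sum_congr rfl fun j _ => ?_
  simp [lastRowCofactor, Fin.succAbove_last, Matrix.submatrix]
  ring

theorem det_lastRow_consZero :
    (Matrix.of fun i j : Fin (n + 1) => if (i : ℕ) < n then s (i + j) else consZero s j).det
      = (-1) ^ n * hankelm1 s n := by
  -- moving the last row to the top gives the Hankel matrix of `0, s₀, s₁, …`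
  have hrot : (Matrix.of fun i j : Fin (n + 1) => if (i : ℕ) < n then s (i + j) else consZero s j)
      = (Matrix.of fun i j : Fin (n + 1) => consZero s (i + j)).submatrix
          (finRotate (n + 1)) id := by
    ext i j
    rcases Fin.eq_castSucc_or_eq_last i with ⟨i, rfl⟩ | rfl <;> simp [consZero, add_right_comm]
  rw [hrot, Matrix.det_permute, sign_finRotate, hankelm1_eq_hankelDet, hankelDet]
  simp

def pnPolynomial : ℝ[X] :=
  C (√(hankelPrev s n * hankel s n))⁻¹ *
    ∑ j : Fin (n + 1), C (lastRowCofactor s n j) * X ^ (j : ℕ)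

theorem eval_pnPolynomial (z : ℝ) : (pnPolynomial s n).eval z = Pn s n z := by
  simp [pnPolynomial, Pn, det_lastRow, eval_finsetSum]

theorem Pn_zero :
    Pn s n 0 = (√(hankelPrev s n * hankel s n))⁻¹ * ((-1) ^ n * hankel1 s n) := by
  rw [← eval_pnPolynomial, pnPolynomial, eval_mul, eval_C, eval_finsetSum,
    Fintype.sum_eq_single 0 fun j hj => by simp [Fin.val_ne_zero_iff.mpr hj]]
  simp [lastRowCofactor, hankel1_eq_hankelDet, hankelDet, add_assoc]

theorem integrable_eval_divX_X_pow {ρ : Measure ℝ} (hρ : IsMomentSolution s ρ) (j : ℕ) :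
    Integrable (fun t => (divX (X ^ j : ℝ[X])).eval t) ρ := by
  rcases j with _ | j
  · simp
  · simpa [divX_X_pow] using (hρ j).1

theorem integral_eval_divX_X_pow {ρ : Measure ℝ} (hρ : IsMomentSolution s ρ) (j : ℕ) :
    ∫ t, (divX (X ^ j : ℝ[X])).eval t ∂ρ = consZero s j := by
  rcases j with _ | j
  · simp [consZero]
  · simpa [divX_X_pow, consZero] using (hρ j).2

theorem Qn_zero {ρ : Measure ℝ} (hρ : IsMomentSolution s ρ) :
    Qn s ρ n 0 = (√(hankelPrev s n * hankel s n))⁻¹ * ((-1) ^ n * hankelm1 s n) := by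
  have hdslope : ∀ t, (if t = 0 then deriv (Pn s n) 0 else (Pn s n t - Pn s n 0) / (t - 0))
      = (divX (pnPolynomial s n)).eval t := by
    intro t
    rw [← dslope_eval_zero, funext (eval_pnPolynomial s n)]
    split_ifs with ht
    · rw [ht, dslope_same]
    · rw [dslope_of_ne _ ht, slope_def_field]
  have hdivX : divX (∑ j : Fin (n + 1), C (lastRowCofactor s n j) * X ^ (j : ℕ))
      = ∑ j : Fin (n + 1), C (lastRowCofactor s n j) * divX (X ^ (j : ℕ)) := by
    rw [← divX_hom_toFun, map_sum]
    simp [divX_C_mul]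
  simp only [Qn, hdslope, pnPolynomial, divX_C_mul, hdivX, eval_mul, eval_C, eval_finsetSum,
    ← det_lastRow_consZero, det_lastRow, integral_const_mul]
  rw [integral_finsetSum _ fun (j : Fin (n + 1)) _ =>
    (integrable_eval_divX_X_pow s hρ j).const_mul (lastRowCofactor s n j)]
  simp only [integral_const_mul, integral_eval_divX_X_pow s hρ]

end OrthogonalPolynomials

section StrictlyPositive

variable {s : ℕ → ℝ}

theorem hankelPrev_mul_hankel_pos (h0 : ∀ n, 0 < hankel s n) (n : ℕ) :
    0 < hankelPrev s n * hankel s n := by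
  cases n <;> simp [hankelPrev, h0]

theorem sq_inv_sqrt_mul_neg_one_pow_mul {d : ℝ} (hd : 0 ≤ d) (n : ℕ) (a : ℝ) :
    ((√d)⁻¹ * ((-1) ^ n * a)) ^ 2 = a ^ 2 / d := by
  rw [mul_pow, mul_pow, inv_pow, Real.sq_sqrt hd, ← pow_mul, mul_comm n, pow_mul]
  simp [div_eq_inv_mul]

theorem sq_Pn_zero (h0 : ∀ n, 0 < hankel s n) (n : ℕ) :
    Pn s n 0 ^ 2 = hankel1 s n ^ 2 / (hankelPrev s n * hankel s n) := by
  rw [Pn_zero, sq_inv_sqrt_mul_neg_one_pow_mul (hankelPrev_mul_hankel_pos h0 n).le]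

theorem sq_Qn_zero {ρ : Measure ℝ} (hρ : IsMomentSolution s ρ) (h0 : ∀ n, 0 < hankel s n)
    (n : ℕ) : Qn s ρ n 0 ^ 2 = hankelm1 s n ^ 2 / (hankelPrev s n * hankel s n) := by
  rw [Qn_zero s n hρ, sq_inv_sqrt_mul_neg_one_pow_mul (hankelPrev_mul_hankel_pos h0 n).le]

theorem Pn_zero_ne_zero (h0 : ∀ n, 0 < hankel s n) {n : ℕ} (hn : hankel1 s n ≠ 0) :
    Pn s n 0 ≠ 0 := by
  rw [← pow_ne_zero_iff two_ne_zero, sq_Pn_zero h0]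
  exact div_ne_zero (pow_ne_zero 2 hn) (hankelPrev_mul_hankel_pos h0 n).ne'

theorem Qn_zero_div_Pn_zero {ρ : Measure ℝ} (hρ : IsMomentSolution s ρ)
    (h0 : ∀ n, 0 < hankel s n) (n : ℕ) :
    Qn s ρ n 0 / Pn s n 0 = hankelm1 s n / hankel1 s n := by
  have hc : (√(hankelPrev s n * hankel s n))⁻¹ ≠ 0 :=
    inv_ne_zero (Real.sqrt_ne_zero'.mpr (hankelPrev_mul_hankel_pos h0 n))
  rw [Qn_zero s n hρ, Pn_zero, mul_div_mul_left _ _ hc,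
    mul_div_mul_left _ _ (pow_ne_zero n (neg_ne_zero.mpr one_ne_zero))]

theorem sum_sq_Pn_zero (h0 : ∀ n, 0 < hankel s n) (N : ℕ) :
    ∑ n ∈ Finset.range (N + 1), Pn s n 0 ^ 2 = hankel2 s N / hankel s N := by
  induction N with
  | zero => simp [sq_Pn_zero h0, hankel1_zero, hankel2_zero, hankelPrev]
  | succ N ih =>
    rw [Finset.sum_range_succ, ih, sq_Pn_zero h0, hankelPrev]
    have := (h0 N).ne'
    have := (h0 (N + 1)).ne'
    field_simp
    linear_combination hankel_succ_mul_hankel2 s N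

theorem sum_sq_Qn_zero {ρ : Measure ℝ} (hρ : IsMomentSolution s ρ) (h0 : ∀ n, 0 < hankel s n)
    (N : ℕ) : ∑ n ∈ Finset.range (N + 1), Qn s ρ n 0 ^ 2 = -hankelm2 s N / hankel s N := by
  induction N with
  | zero => simp [sq_Qn_zero hρ h0, hankelm1_zero, hankelm2_zero]
  | succ N ih =>
    rw [Finset.sum_range_succ, ih, sq_Qn_zero hρ h0, hankelPrev]
    have := (h0 N).ne'
    have := (h0 (N + 1)).ne'
    field_simp
    linear_combination hankelm2_succ_mul_hankel s N

theorem hankel1_ne_zero_or_succ_ne_zero (h0 : ∀ n, 0 < hankel s n) (n : ℕ) :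
    hankel1 s n ≠ 0 ∨ hankel1 s (n + 1) ≠ 0 := by
  by_contra! h
  have := hankelm1_succ_mul_hankel1 s n
  rw [h.1, h.2] at this
  nlinarith [h0 n]

end StrictlyPositive

theorem StrictMono.apply_succ_eq_add_one_or_eq_add_two {k : ℕ → ℕ} (hk : StrictMono k)
    {p : ℕ → Prop} (hrange : ∀ n, p n → ∃ j, k j = n) (hp : ∀ n, p n ∨ p (n + 1))
    (i : ℕ) :
    k (i + 1) = k i + 1 ∨ k (i + 1) = k i + 2 := by
  have hlt := hk (lt_add_one i)
  by_contra! h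
  have hgap : ∀ n, k i < n → n < k (i + 1) → ¬p n := fun n h1 h2 hn =>
    (hrange n hn).elim (hk.monotone.ne_of_lt_of_lt_nat i h1 h2)
  rcases hp (k i + 1) with h1 | h1 <;> exact hgap _ (by omega) (by omega) h1

theorem Finset.sum_range_succ_eq_sum_subseq_add_sum_gaps {M : Type*} [AddCommMonoid M]
    {k : ℕ → ℕ} (hk0 : k 0 = 0) (hk : ∀ i, k (i + 1) = k i + 1 ∨ k (i + 1) = k i + 2)
    (f : ℕ → M) (J : ℕ) :
    ∑ n ∈ range (k J + 1), f n
      = ∑ i ∈ range (J + 1), f (k i)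
        + ∑ i ∈ range J, if k (i + 1) = k i + 1 then 0 else f (k i + 1) := by
  induction J with
  | zero => simp [hk0]
  | succ J ih =>
    rw [sum_range_succ (fun i => f (k i)) (J + 1),
      sum_range_succ (fun i => if k (i + 1) = k i + 1 then 0 else f (k i + 1)) J]
    rcases hk J with h | h
    · rw [h, if_pos rfl, sum_range_succ, ih]
      abel
    · rw [h, if_neg (by omega), show k J + 2 + 1 = k J + 1 + 1 + 1 by rfl, sum_range_succ,
        sum_range_succ, ih]
      abel

section Subsequence

variable {s : ℕ → ℝ} {k : ℕ → ℕ}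

theorem apply_succ_eq_add_one_or_eq_add_two_and_hankel1_eq_zero (h0 : ∀ n, 0 < hankel s n)
    (hk : StrictMono k) (hkall : ∀ n, hankel1 s n ≠ 0 → ∃ j, k j = n) (i : ℕ) :
    k (i + 1) = k i + 1 ∨ k (i + 1) = k i + 2 ∧ hankel1 s (k i + 1) = 0 := by
  refine (hk.apply_succ_eq_add_one_or_eq_add_two hkall (hankel1_ne_zero_or_succ_ne_zero h0)
    i).imp_right fun h => ⟨h, ?_⟩
  by_contra hne
  obtain ⟨j, hj⟩ := hkall _ hne
  exact hk.monotone.ne_of_lt_of_lt_nat i (by omega) (by omega) j hj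

theorem sum_sq_Pn_zero_comp (h0 : ∀ n, 0 < hankel s n) (hk0 : k 0 = 0)
    (hk : ∀ i, k (i + 1) = k i + 1 ∨ k (i + 1) = k i + 2 ∧ hankel1 s (k i + 1) = 0)
    (J : ℕ) :
    ∑ i ∈ Finset.range (J + 1), Pn s (k i) 0 ^ 2 = hankel2 s (k J) / hankel s (k J) := by
  have hskipped : ∑ i ∈ Finset.range J,
      (if k (i + 1) = k i + 1 then 0 else Pn s (k i + 1) 0 ^ 2) = 0 :=
    Finset.sum_eq_zero fun i _ => by
      split_ifs with h
      · rfl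
      · rw [sq_Pn_zero h0, ((hk i).resolve_left h).2, zero_pow two_ne_zero, zero_div]
  rw [← sum_sq_Pn_zero h0,
    Finset.sum_range_succ_eq_sum_subseq_add_sum_gaps hk0 (fun i => (hk i).imp_right And.left),
    hskipped, add_zero]

theorem sum_range_Qn_div_Pn_sub {ρ : Measure ℝ} (hρ : IsMomentSolution s ρ)
    (h0 : ∀ n, 0 < hankel s n) (hk0 : k 0 = 0) (J : ℕ) :
    ∑ i ∈ Finset.range J,
        (Qn s ρ (k i) 0 / Pn s (k i) 0 - Qn s ρ (k (i + 1)) 0 / Pn s (k (i + 1)) 0)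
      = -(hankelm1 s (k J) / hankel1 s (k J)) := by
  rw [Finset.sum_range_sub', hk0, Qn_zero_div_Pn_zero hρ h0, Qn_zero_div_Pn_zero hρ h0,
    hankelm1_zero, zero_div, zero_sub]

end Subsequence

section StepFunction

variable {x : ℕ → ℝ} (ω : ℕ → ℝ)

theorem sum_ite_lt_eq_of_mem_Ioc (hx : Monotone x) {m N : ℕ} (hmN : m < N) {t : ℝ}
    (ht : t ∈ Set.Ioc (x m) (x (m + 1))) :
    ∑ i ∈ Finset.range N, (if x i < t then ω i else 0)
      = ∑ i ∈ Finset.range (m + 1), ω i := by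
  rw [← Finset.sum_filter]
  congr 1
  ext i
  simp only [Finset.mem_filter, Finset.mem_range]
  constructor
  · exact fun hi => hx.reflect_lt (hi.2.trans_le ht.2)
  · exact fun hi => ⟨by omega, (hx (Nat.lt_succ_iff.mp hi)).trans_lt ht.1⟩

theorem sum_ite_lt_eq_zero_of_le (hx : Monotone x) (N : ℕ) {t : ℝ} (ht : t ≤ x 0) :
    ∑ i ∈ Finset.range N, (if x i < t then ω i else 0) = 0 :=
  Finset.sum_eq_zero fun i _ => if_neg (ht.trans (hx (Nat.zero_le i))).not_gt

theorem integrableOn_sq_sum_ite_lt (N : ℕ) (a b : ℝ) :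
    IntegrableOn (fun t => (∑ i ∈ Finset.range N, if x i < t then ω i else 0) ^ 2)
      (Set.Ioc a b) := by
  refine Measure.integrableOn_of_bounded (M := (∑ i ∈ Finset.range N, |ω i|) ^ 2)
    measure_Ioc_lt_top.ne ?_ (Filter.Eventually.of_forall fun t => ?_)
  · exact ((Finset.measurable_sum _ fun i _ => Measurable.ite measurableSet_Ioi
      measurable_const measurable_const).pow_const 2).aestronglyMeasurable
  · rw [norm_pow, Real.norm_eq_abs]
    gcongr
    refine (Finset.abs_sum_le_sum_abs _ _).trans (Finset.sum_le_sum fun i _ => ?_)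
    split_ifs <;> simp

theorem setIntegral_Ioc_sq_sum_ite_lt (hx : Monotone x) (hx0 : 0 ≤ x 0) (J : ℕ) :
    ∫ t in Set.Ioc 0 (x J), (∑ i ∈ Finset.range (J + 1), if x i < t then ω i else 0) ^ 2
      = ∑ m ∈ Finset.range J,
          (x (m + 1) - x m) * (∑ i ∈ Finset.range (m + 1), ω i) ^ 2 := by
  induction J with
  | zero =>
    simp only [Finset.sum_range_zero]
    exact setIntegral_eq_zero_of_forall_eq_zero fun t ht => by
      rw [sum_ite_lt_eq_zero_of_le ω hx _ ht.2, zero_pow two_ne_zero]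
  | succ J ih =>
    have hJ : x J ≤ x (J + 1) := hx J.le_succ
    have hleft : ∫ t in Set.Ioc 0 (x J),
        (∑ i ∈ Finset.range (J + 2), if x i < t then ω i else 0) ^ 2
        = ∫ t in Set.Ioc 0 (x J),
            (∑ i ∈ Finset.range (J + 1), if x i < t then ω i else 0) ^ 2 :=
      setIntegral_congr_fun measurableSet_Ioc fun t ht => by
        simp only [Finset.sum_range_succ _ (J + 1), if_neg (ht.2.trans hJ).not_gt, add_zero]
    have hright : ∫ t in Set.Ioc (x J) (x (J + 1)),
        (∑ i ∈ Finset.range (J + 2), if x i < t then ω i else 0) ^ 2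
        = (x (J + 1) - x J) * (∑ i ∈ Finset.range (J + 1), ω i) ^ 2 := by
      rw [setIntegral_congr_fun measurableSet_Ioc fun t ht => by
          rw [sum_ite_lt_eq_of_mem_Ioc ω hx (m := J) (by omega) ht],
        setIntegral_const, Real.volume_real_Ioc_of_le hJ, smul_eq_mul]
    rw [← Set.Ioc_union_Ioc_eq_Ioc (hx0.trans (hx J.zero_le)) hJ,
      setIntegral_union (Set.Ioc_disjoint_Ioc_of_le le_rfl) measurableSet_Ioc
        (integrableOn_sq_sum_ite_lt ω _ _ _) (integrableOn_sq_sum_ite_lt ω _ _ _),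
      hleft, hright, ih]
    exact (Finset.sum_range_succ _ J).symm

end StepFunction

theorem extended_stieltjes_formulas_general (s : ℕ → ℝ) (ρ : Measure ℝ)
    (hρ : IsMomentSolution s ρ)
    (h0 : ∀ n, 0 < hankel s n)
    (k : ℕ → ℕ) (hk0 : k 0 = 0) (hkmono : StrictMono k)
    (hkne : ∀ j, hankel1 s (k j) ≠ 0)
    (hkall : ∀ n, hankel1 s n ≠ 0 → ∃ j, k j = n)
    (l x ω υ : ℕ → ℝ)
    (hl : ∀ j, l j = (Pn s (k j) 0) ^ 2)
    (hx : ∀ j, x j = ∑ i ∈ Finset.range (j + 1), l i)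
    (hω : ∀ j, ω j = Qn s ρ (k j) 0 / Pn s (k j) 0
      - Qn s ρ (k (j + 1)) 0 / Pn s (k (j + 1)) 0)
    (hυ : ∀ j, υ j = if k (j + 1) = k j + 1 then 0 else (Qn s ρ (k j + 1) 0) ^ 2) :
    ∀ j : ℕ,
      x j = hankel2 s (k j) / hankel s (k j) ∧
      (∑ i ∈ Finset.range j, ω i) = -(hankelm1 s (k j)) / hankel1 s (k j) ∧
      (∫ t in Set.Ioc (0 : ℝ) (x j),
          (∑ i ∈ Finset.range (j + 1), if x i < t then ω i else 0) ^ 2) +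
        (∑ i ∈ Finset.range j, υ i) = -(hankelm2 s (k j)) / hankel s (k j) := by
  have hk := apply_succ_eq_add_one_or_eq_add_two_and_hankel1_eq_zero h0 hkmono hkall
  have hω_sum : ∀ J, ∑ i ∈ Finset.range J, ω i = -(hankelm1 s (k J) / hankel1 s (k J)) :=
    fun J => by rw [Finset.sum_congr rfl fun i _ => hω i, sum_range_Qn_div_Pn_sub hρ h0 hk0]
  have hxmono : Monotone x := monotone_nat_of_le_succ fun i => by
    rw [hx, hx, Finset.sum_range_succ _ (i + 1), hl (i + 1)]
    exact le_add_of_nonneg_right (sq_nonneg _)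
  have hstep : ∀ m, (x (m + 1) - x m) * (∑ i ∈ Finset.range (m + 1), ω i) ^ 2
      = Qn s ρ (k (m + 1)) 0 ^ 2 := fun m => by
    have hP := Pn_zero_ne_zero h0 (hkne (m + 1))
    rw [hx, hx, Finset.sum_range_succ _ (m + 1), add_sub_cancel_left, hl, hω_sum,
      ← Qn_zero_div_Pn_zero hρ h0]
    field_simp
  intro j
  refine ⟨?_, by rw [hω_sum, neg_div], ?_⟩
  · rw [hx, Finset.sum_congr rfl fun i _ => hl i, sum_sq_Pn_zero_comp h0 hk0 hk]
  · rw [setIntegral_Ioc_sq_sum_ite_lt ω hxmono (by rw [hx, Finset.sum_range_one, hl]; positivity),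
      Finset.sum_congr rfl fun m _ => hstep m, ← sum_sq_Qn_zero hρ h0,
      Finset.sum_range_succ_eq_sum_subseq_add_sum_gaps hk0 (fun i => (hk i).imp_right And.left),
      Finset.sum_range_succ', hk0, Qn_zero s 0 hρ, hankelm1_zero,
      Finset.sum_congr rfl fun i _ => hυ i]
    ring

/-- Extended Stieltjes formulas for the Krein–Langer string associated with a strictly
positive moment sequence: with `k(j)` enumerating the indices where `Δ_{1,·} ≠ 0` and
`l_j = |P_{k(j)}(0)|²`, `x_j = Σ_{i≤j} l_i`,
`ω_j = Q_{k(j)}(0)/P_{k(j)}(0) − Q_{k(j+1)}(0)/P_{k(j+1)}(0)`,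
`υ_j = 0` if `k(j+1) − k(j) = 1` and `υ_j = |Q_{k(j)+1}(0)|²` if `k(j+1) − k(j) = 2`,
one has `x_j = Δ_{2,k(j)}/Δ_{0,k(j)}`, `Σ_{i<j} ω_i = −Δ_{−1,k(j)}/Δ_{1,k(j)}` and
`∫_0^{x_j} w(x)² dx + Σ_{i<j} υ_i = −Δ_{−2,k(j)}/Δ_{0,k(j)}` for the piecewise-constant
function `w(x) = Σ_{i : x_i < x} ω_i`. -/
theorem extended_stieltjes_formulas (s : ℕ → ℝ) (ρ : Measure ℝ)
    [IsProbabilityMeasure ρ] (hρ : IsMomentSolution s ρ)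
    (h0 : ∀ n, 0 < hankel s n)
    (k : ℕ → ℕ) (hk0 : k 0 = 0) (hkmono : StrictMono k)
    (hkne : ∀ j, hankel1 s (k j) ≠ 0)
    (hkall : ∀ n, hankel1 s n ≠ 0 → ∃ j, k j = n)
    (l x ω υ : ℕ → ℝ)
    (hl : ∀ j, l j = (Pn s (k j) 0) ^ 2)
    (hx : ∀ j, x j = ∑ i ∈ Finset.range (j + 1), l i)
    (hω : ∀ j, ω j = Qn s ρ (k j) 0 / Pn s (k j) 0
      - Qn s ρ (k (j + 1)) 0 / Pn s (k (j + 1)) 0)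
    (hυ : ∀ j, υ j = if k (j + 1) = k j + 1 then 0 else (Qn s ρ (k j + 1) 0) ^ 2) :
    ∀ j : ℕ,
      x j = hankel2 s (k j) / hankel s (k j) ∧
      (∑ i ∈ Finset.range j, ω i) = -(hankelm1 s (k j)) / hankel1 s (k j) ∧
      (∫ t in Set.Ioc (0 : ℝ) (x j),
          (∑ i ∈ Finset.range (j + 1), if x i < t then ω i else 0) ^ 2) +
        (∑ i ∈ Finset.range j, υ i) = -(hankelm2 s (k j)) / hankel s (k j) :=
  extended_stieltjes_formulas_general s ρ hρ h0 k hk0 hkmono hkne hkall l x ω υ hl hx hω hυ
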